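/- Let g ≥ 1, let 𝐬 : ℝ^g → ℝ^g be the Viète map 𝐬(t) = (e₁(t),…,e_g(t)), and let A_g = {t ∈ (−2,2)^g : t₁ < t₂ < ⋯ < t_g}. For every continuous function φ : ℝ^g → ℝ, ∫_{A_g} φ(𝐬(t)) · ∏_{1≤j<k≤g} (t_k − t_j) dt₁⋯dt_g = ∫_{𝐬(A_g)} φ(v) dv₁⋯dv_g, where the right-hand side is the Lebesgue integral over the open set 𝐬(A_g) ⊂ ℝ^g. -/

import Mathlib

open MeasureTheory

/-- The elementary symmetric polynomial of degree `k` in `g` variables. -/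
def esymm (g k : ℕ) (t : Fin g → ℝ) : ℝ :=
  ∑ s ∈ Finset.univ.powersetCard k, ∏ j ∈ s, t j

/-- The Viète map `𝐬(t) = (e₁(t), …, e_g(t))`. -/
def viete (g : ℕ) (t : Fin g → ℝ) : Fin g → ℝ := fun i => esymm g ((i : ℕ) + 1) t

/-- The fundamental alcove `A_g = {t ∈ (−2,2)^g : t₁ < ⋯ < t_g}`. -/
def alcove (g : ℕ) : Set (Fin g → ℝ) :=
  {t | (∀ j : Fin g, t j ∈ Set.Ioo (-2 : ℝ) 2) ∧ StrictMono t}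

/-!
The Viète map is polynomial, with Jacobian matrix `∂e_{i+1}/∂t_j = e_i(t without t_j)`.
Multiplying the column-reversed Vandermonde matrix of `t` by this Jacobian with rows signed by
`(-1)^i` evaluates `∏_{j ≠ i} (x - t_j)` at `x = t_m` (Vieta's formulas), which gives a diagonal
matrix whose determinant is `±V(t)²`, where `V(t) = ∏_{j<k} (t_k - t_j)` is the Vandermonde
determinant. Hence `|det J| = |V(t)|` whenever the `t_j` are distinct. On the alcove the Viète
map is injective: a monic polynomial determines its multiset of roots, and an increasing tuple is
determined by its range. The change-of-variables formula then gives the theorem.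
-/

open Finset Polynomial

theorem Finset.sum_powersetCard_succ_filter_mem_prod_erase {α R : Type*} [DecidableEq α]
    [CommSemiring R] {s : Finset α} {j : α} (hj : j ∈ s) (k : ℕ) (f : α → R) :
    ∑ u ∈ (s.powersetCard (k + 1)).filter (j ∈ ·), ∏ m ∈ u.erase j, f m
      = ∑ u ∈ (s.erase j).powersetCard k, ∏ m ∈ u, f m := by
  refine sum_nbij' (·.erase j) (insert j) ?_ ?_ ?_ ?_ fun _ _ => rfl
  · intro u hu
    simp only [mem_filter, mem_powersetCard] at hu ⊢
    exact ⟨erase_subset_erase j hu.1.1,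
      by rw [card_erase_of_mem hu.2, hu.1.2, Nat.add_sub_cancel]⟩
  · intro u hu
    simp only [mem_powersetCard, subset_erase] at hu
    simp only [mem_filter, mem_powersetCard, mem_insert_self, and_true]
    exact ⟨insert_subset hj hu.1.1, by rw [card_insert_of_notMem hu.1.2, hu.2]⟩
  · intro u hu
    exact insert_erase (mem_filter.1 hu).2
  · intro u hu
    exact erase_insert (subset_erase.1 (mem_powersetCard.1 hu).1).2

theorem Multiset.eq_of_esymm_eq {R : Type*} [CommRing R] [IsDomain R] {s t : Multiset R}
    (hcard : Multiset.card s = Multiset.card t)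
    (h : ∀ k ≤ Multiset.card s, s.esymm k = t.esymm k) : s = t := by
  have hprod : (s.map fun r => X - C r).prod = (t.map fun r => X - C r).prod := by
    rw [Multiset.prod_X_sub_X_eq_sum_esymm, Multiset.prod_X_sub_X_eq_sum_esymm, ← hcard]
    exact sum_congr rfl fun k hk => by rw [h k (Nat.lt_succ_iff.1 (mem_range.1 hk))]
  simpa only [roots_multiset_prod_X_sub_C] using congrArg roots hprod

def esymmErase (g k : ℕ) (j : Fin g) (t : Fin g → ℝ) : ℝ :=
  ∑ s ∈ (univ.erase j).powersetCard k, ∏ m ∈ s, t m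

def vieteJacobian (g : ℕ) (t : Fin g → ℝ) : Matrix (Fin g) (Fin g) ℝ :=
  Matrix.of fun i j => esymmErase g i j t

theorem hasFDerivAt_esymm_succ (g k : ℕ) (t : Fin g → ℝ) :
    HasFDerivAt (esymm g (k + 1))
      (∑ j, esymmErase g k j t • (ContinuousLinearMap.proj j : (Fin g → ℝ) →L[ℝ] ℝ)) t := by
  have hprod (s : Finset (Fin g)) : HasFDerivAt (fun x : Fin g → ℝ => ∏ j ∈ s, x j)
      (∑ j ∈ s, (∏ m ∈ s.erase j, t m) • (ContinuousLinearMap.proj j : (Fin g → ℝ) →L[ℝ] ℝ))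
      t :=
    .finsetProd fun j _ => hasFDerivAt_apply j t
  refine .congr_fderiv
    (HasFDerivAt.fun_sum fun s (_ : s ∈ univ.powersetCard (k + 1)) => hprod s) ?_
  rw [sum_comm' (t' := univ) (s' := fun j => (univ.powersetCard (k + 1)).filter (j ∈ ·))
    (fun s j => by simp)]
  refine sum_congr rfl fun j _ => ?_
  rw [← sum_smul, sum_powersetCard_succ_filter_mem_prod_erase (mem_univ j), esymmErase]

theorem hasFDerivAt_viete (g : ℕ) (t : Fin g → ℝ) :
    HasFDerivAt (viete g) (Matrix.toLin' (vieteJacobian g t)).toContinuousLinearMap t := by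
  refine hasFDerivAt_pi'.2 fun i => (hasFDerivAt_esymm_succ g i t).congr_fderiv ?_
  ext v
  simp [Matrix.mulVec, dotProduct, vieteJacobian]

theorem prod_erase_sub_eq_sum_esymmErase {g : ℕ} (i : Fin g) (t : Fin g → ℝ) (x : ℝ) :
    ∏ j ∈ univ.erase i, (x - t j)
      = ∑ k : Fin g, (-1) ^ (k : ℕ) * esymmErase g k i t * x ^ (g - 1 - k) := by
  set s := (univ.erase i).val.map t
  have hcard : Multiset.card s = g - 1 := by simp [s]
  calc ∏ j ∈ univ.erase i, (x - t j)
      = ((s.map fun r => X - C r).prod).eval x := by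
        simp [s, eval_multiset_prod, prod_eq_multiset_prod]
    _ = ∑ k ∈ range g, (-1) ^ k * s.esymm k * x ^ (g - 1 - k) := by
        rw [Multiset.prod_X_sub_X_eq_sum_esymm, hcard, Nat.sub_add_cancel i.pos]
        simp [eval_finsetSum, mul_assoc]
    _ = _ := by
        rw [← Fin.sum_univ_eq_sum_range (fun k => (-1) ^ k * s.esymm k * x ^ (g - 1 - k))]
        simp only [s, Finset.esymm_map_val, esymmErase]

theorem vandermonde_rev_mul_signed_vieteJacobian {g : ℕ} (t : Fin g → ℝ) :
    (Matrix.vandermonde t).submatrix id Fin.revPerm *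
        (Matrix.diagonal (fun k : Fin g => (-1 : ℝ) ^ (k : ℕ)) * vieteJacobian g t)
      = Matrix.diagonal fun i => ∏ j ∈ univ.erase i, (t i - t j) := by
  ext m i
  trans ∏ j ∈ univ.erase i, (t m - t j)
  · rw [prod_erase_sub_eq_sum_esymmErase, Matrix.mul_apply]
    refine sum_congr rfl fun k _ => ?_
    simp only [Matrix.submatrix_apply, id_eq, Fin.revPerm_apply, Matrix.vandermonde_apply,
      Fin.val_rev, vieteJacobian, Matrix.diagonal_mul, Matrix.of_apply, Nat.sub_sub,
      Nat.add_comm 1]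
    ring
  · by_cases h : m = i
    · rw [h, Matrix.diagonal_apply_eq]
    · rw [Matrix.diagonal_apply_ne _ h]
      exact prod_eq_zero (mem_erase.2 ⟨h, mem_univ m⟩) (sub_self _)

theorem abs_prod_prod_erase_sub {g : ℕ} (t : Fin g → ℝ) :
    |∏ i, ∏ j ∈ univ.erase i, (t i - t j)| = (Matrix.vandermonde t).det ^ 2 := by
  have hsplit (i : Fin g) : univ.erase i = Iio i ∪ Ioi i := by
    ext j; simp [lt_or_lt_iff_ne]
  have hdisj (i : Fin g) : Disjoint (Iio i) (Ioi i) :=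
    disjoint_left.2 fun j hj hj' => (mem_Iio.1 hj).not_gt (mem_Ioi.1 hj')
  simp only [hsplit, prod_union (hdisj _), prod_mul_distrib, abs_mul, abs_prod]
  rw [prod_comm' (t' := univ) (s' := Ioi) (by simp), ← sq_abs, sq, Matrix.det_vandermonde,
    abs_prod]
  simp only [abs_prod, abs_sub_comm (t _) (t _)]

theorem abs_det_vieteJacobian {g : ℕ} {t : Fin g → ℝ} (ht : Function.Injective t) :
    |(vieteJacobian g t).det| = |(Matrix.vandermonde t).det| := by
  have hV : |(Matrix.vandermonde t).det| ≠ 0 :=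
    abs_ne_zero.2 (Matrix.det_vandermonde_ne_zero_iff.2 ht)
  have key := congrArg (|Matrix.det ·|) (vandermonde_rev_mul_signed_vieteJacobian t)
  rw [Matrix.det_diagonal, abs_prod_prod_erase_sub] at key
  simp only [Matrix.det_mul, Matrix.det_permute', Matrix.det_diagonal, abs_mul, abs_prod,
    abs_pow, abs_neg, abs_one, one_pow, prod_const_one, abs_unit_intCast, one_mul] at key
  exact mul_left_cancel₀ hV (by rw [key, ← sq_abs, sq])

theorem viete_injOn_strictMono (g : ℕ) : Set.InjOn (viete g) {t | StrictMono t} := by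
  intro a ha b hb hab
  have hesymm : ∀ k ≤ Multiset.card (univ.val.map a),
      (univ.val.map a).esymm k = (univ.val.map b).esymm k := by
    rintro (_ | k) hk
    · simp [Multiset.esymm]
    · rw [Finset.esymm_map_val, Finset.esymm_map_val]
      exact congrFun hab ⟨k, by simpa using hk⟩
  have hmap := Multiset.eq_of_esymm_eq (by simp) hesymm
  rw [← ha.range_inj hb]
  ext x
  simpa using congrArg (x ∈ ·) hmap

theorem measurableSet_alcove (g : ℕ) : MeasurableSet (alcove g) := by
  simp only [alcove, StrictMono, Set.ofPred_and, Set.ofPred_forall]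
  measurability

theorem integral_viete_change_of_variables_general (g : ℕ)
    (φ : (Fin g → ℝ) → ℝ) :
    ∫ t in alcove g,
        φ (viete g t) * ∏ j : Fin g, ∏ k ∈ Finset.Ioi j, (t k - t j)
      = ∫ v in viete g '' alcove g, φ v := by
  rw [integral_image_eq_integral_abs_det_fderiv_smul volume (measurableSet_alcove g)
    (fun t _ => (hasFDerivAt_viete g t).hasFDerivWithinAt)
    ((viete_injOn_strictMono g).mono fun _ ht => ht.2) φ]
  refine setIntegral_congr_fun (measurableSet_alcove g) fun t ht => ?_
  have hV : 0 < ∏ j : Fin g, ∏ k ∈ Ioi j, (t k - t j) :=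
    prod_pos fun j _ => prod_pos fun k hk => sub_pos.2 (ht.2 (mem_Ioi.1 hk))
  rw [LinearMap.det_toContinuousLinearMap, LinearMap.det_toLin',
    abs_det_vieteJacobian ht.2.injective, Matrix.det_vandermonde, abs_of_pos hV, smul_eq_mul,
    mul_comm]

/-- Change of variables along the Viète map on the fundamental alcove:
`∫_{A_g} φ(𝐬(t)) ∏_{j<k}(t_k − t_j) dt = ∫_{𝐬(A_g)} φ(v) dv`. -/
theorem integral_viete_change_of_variables (g : ℕ) (hg : 1 ≤ g)
    (φ : (Fin g → ℝ) → ℝ) (hφ : Continuous φ) :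
    ∫ t in alcove g,
        φ (viete g t) * ∏ j : Fin g, ∏ k ∈ Finset.Ioi j, (t k - t j)
      = ∫ v in viete g '' alcove g, φ v :=
  integral_viete_change_of_variables_general g φ
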